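/- For the DFA A' constructed from a monotone circuit g_1,…,g_n: if state ⊤ is not reachable from state n in A' (i.e., there is no word w ∈ Σ* with δ(n,w) = ⊤), then the language L(A') is finite. -/

import Mathlib

/-- The type of a gate in a monotone circuit with `n + 1` gates: a `0`-gate, a
`1`-gate, an `∧`-gate with children `l, r`, or an `∨`-gate with children `l, r`. -/
inductive Gate (n : ℕ) where
  | zero : Gate n
  | one : Gate n
  | and (l r : Fin (n + 1)) : Gate n
  | or (l r : Fin (n + 1)) : Gate n

/-- A monotone circuit with gates `g_0, …, g_n`, where the children of each
`∧`- or `∨`-gate have strictly smaller indices. -/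
structure Circuit (n : ℕ) where
  gate : Fin (n + 1) → Gate n
  and_lt : ∀ i l r, gate i = Gate.and l r → l < i ∧ r < i
  or_lt : ∀ i l r, gate i = Gate.or l r → l < i ∧ r < i

set_option linter.unusedVariables false in
/-- The value of gate `i`: `0`-gates are false, `1`-gates are true, `∧`-gates and
`∨`-gates take the conjunction resp. disjunction of their children's values. -/
def Circuit.val {n : ℕ} (c : Circuit n) (i : Fin (n + 1)) : Bool :=
  match h : c.gate i with
  | Gate.zero => false
  | Gate.one => true
  | Gate.and l r =>
      have hlt := c.and_lt i l r h;
      c.val l && c.val r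
  | Gate.or l r =>
      have hlt := c.or_lt i l r h
      c.val l || c.val r
termination_by (i : ℕ)
decreasing_by
  · exact hlt.1
  · exact hlt.2
  · exact hlt.1
  · exact hlt.2

/-- The alphabet `Σ = {x, y} ∪ {aᵢ, bᵢ : 0 ≤ i ≤ n}`. -/
inductive Alpha (n : ℕ) where
  | x : Alpha n
  | y : Alpha n
  | a (i : Fin (n + 1)) : Alpha n
  | b (i : Fin (n + 1)) : Alpha n
deriving DecidableEq

/-- The states of the DFA `A'`: the initial state `s`, the accepting states
`⊥` (bot) and `⊤` (top), a state for each gate, and a non-accepting sink. -/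
inductive StA (n : ℕ) where
  | s : StA n
  | bot : StA n
  | top : StA n
  | g (i : Fin (n + 1)) : StA n
  | sink : StA n
deriving DecidableEq

/-- The DFA `A'` constructed from the monotone circuit `c`. -/
def dfaA {n : ℕ} (c : Circuit n) : DFA (Alpha n) (StA n) where
  step := fun p ch =>
    match p, ch with
    | StA.s, Alpha.x => StA.g (Fin.last n)
    | StA.top, Alpha.y => StA.s
    | StA.g i, Alpha.a j =>
        if j = i then
          match c.gate i with
          | Gate.zero => StA.bot
          | Gate.one => StA.top
          | Gate.and l _ => StA.g l
          | Gate.or l _ => StA.g l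
        else StA.sink
    | StA.g i, Alpha.b j =>
        if j = i then
          match c.gate i with
          | Gate.zero => StA.bot
          | Gate.one => StA.top
          | Gate.and _ r => StA.g r
          | Gate.or _ r => StA.g r
        else StA.sink
    | _, _ => StA.sink
  start := StA.s
  accept := {StA.bot, StA.top}

/-- The states of the DFA `B`: the initial and accepting state `q`, a state `t`,
a state for each gate (only the `∧`-gate states are used), and a sink. -/
inductive StB (n : ℕ) where
  | q : StB n
  | t : StB n
  | g (i : Fin (n + 1)) : StB n
  | sink : StB n
deriving DecidableEq

/-- The DFA `B` constructed from the monotone circuit `c`. -/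
def dfaB {n : ℕ} (c : Circuit n) : DFA (Alpha n) (StB n) where
  step := fun p ch =>
    match p, ch with
    | StB.q, Alpha.x => StB.t
    | StB.t, Alpha.y => StB.q
    | StB.t, Alpha.a i =>
        match c.gate i with
        | Gate.and _ _ => StB.g i
        | Gate.or _ _ => StB.t
        | Gate.one => StB.t
        | Gate.zero => StB.sink
    | StB.t, Alpha.b i =>
        match c.gate i with
        | Gate.or _ _ => StB.t
        | Gate.one => StB.t
        | _ => StB.sink
    | StB.g i, Alpha.b j =>
        if j = i then
          match c.gate i with
          | Gate.and _ _ => StB.t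
          | _ => StB.sink
        else StB.sink
    | _, _ => StB.sink
  start := StB.q
  accept := {StB.q}

/- The only way out of the gate states other than the sink is through `⊥` or `⊤`, and each
letter read from gate `i` either leaves the gate states or moves to a gate `j < i`.
Since `⊥` is a dead end and `⊤` is excluded, an accepted word is `x` followed by a descent
through the circuit that ends in `⊥`, so its length is at most `n + 2`. -/

instance {n : ℕ} : Finite (Alpha n) :=
  Finite.of_injective (β := Bool ⊕ Fin (n + 1) ⊕ Fin (n + 1))
    (fun
      | .x => .inl true
      | .y => .inl false
      | .a i => .inr (.inl i)
      | .b i => .inr (.inr i))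
    (by rintro (_ | _ | _ | _) (_ | _ | _ | _) h <;> simp_all)

namespace dfaA

variable {n : ℕ} (c : Circuit n)

theorem evalFrom_sink (w : List (Alpha n)) : (dfaA c).evalFrom .sink w = .sink := by
  induction w with
  | nil => rfl
  | cons ch w ih => cases ch <;> exact ih

theorem evalFrom_bot_cons (ch : Alpha n) (w : List (Alpha n)) :
    (dfaA c).evalFrom .bot (ch :: w) = .sink := by
  cases ch <;> exact evalFrom_sink c w

theorem evalFrom_s_cons {ch : Alpha n} (hch : ch ≠ .x) (w : List (Alpha n)) :
    (dfaA c).evalFrom .s (ch :: w) = .sink := by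
  cases ch <;> first | exact absurd rfl hch | exact evalFrom_sink c w

theorem step_g (i : Fin (n + 1)) (ch : Alpha n) :
    (dfaA c).step (.g i) ch = .sink ∨ (dfaA c).step (.g i) ch = .bot ∨
      (dfaA c).step (.g i) ch = .top ∨ ∃ j < i, (dfaA c).step (.g i) ch = .g j := by
  cases ch with
  | x | y => exact .inl rfl
  | a k | b k =>
    by_cases hk : k = i
    · subst hk
      rcases hgate : c.gate k with _ | _ | ⟨l, r⟩ | ⟨l, r⟩
      · simp [dfaA, hgate]
      · simp [dfaA, hgate]
      · simp [dfaA, hgate, c.and_lt k l r hgate]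
      · simp [dfaA, hgate, c.or_lt k l r hgate]
    · simp [dfaA, hk]

theorem length_le_of_evalFrom_g_eq_bot {i : Fin (n + 1)} {w : List (Alpha n)}
    (htop : ∀ u, (dfaA c).evalFrom (.g i) u ≠ .top)
    (hbot : (dfaA c).evalFrom (.g i) w = .bot) : w.length ≤ i + 1 := by
  induction w generalizing i with
  | nil => cases hbot
  | cons ch w ih =>
    rw [DFA.evalFrom_cons] at hbot
    rcases step_g c i ch with hstep | hstep | hstep | ⟨j, hji, hstep⟩ <;> rw [hstep] at hbot
    · simp [evalFrom_sink] at hbot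
    · cases w with
      | nil => simp
      | cons _ _ => cases (evalFrom_bot_cons c _ _).symm.trans hbot
    · exact absurd hstep (htop [ch])
    · have htop_j : ∀ u, (dfaA c).evalFrom (.g j) u ≠ .top := fun u hu =>
        htop (ch :: u) (by rw [DFA.evalFrom_cons, hstep]; exact hu)
      have := ih htop_j hbot
      simp only [List.length_cons]
      omega

end dfaA

/-- If the state `⊤` is not reachable from the state of the output gate in `A'`,
then the language `L(A')` is finite. -/
theorem stmt13 {n : ℕ} (c : Circuit n)
    (h : ¬ ∃ w : List (Alpha n), (dfaA c).evalFrom (StA.g (Fin.last n)) w = StA.top) :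
    Set.Finite {w : List (Alpha n) | w ∈ (dfaA c).accepts} := by
  have h_top : ∀ u, (dfaA c).evalFrom (.g (Fin.last n)) u ≠ .top := fun u hu => h ⟨u, hu⟩
  refine (List.finite_length_le (Alpha n) (n + 2)).subset fun w hw => ?_
  have hacc : (dfaA c).eval w = .bot ∨ (dfaA c).eval w = .top := hw
  obtain _ | ⟨ch, w⟩ := w
  · rcases hacc with hacc | hacc <;> cases hacc
  by_cases hch : ch = .x
  · subst hch
    rcases hacc with hbot | htop
    · have := dfaA.length_le_of_evalFrom_g_eq_bot c h_top hbot
      show w.length + 1 ≤ n + 2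
      omega
    · exact (h_top w htop).elim
  · have hsink : (dfaA c).eval (ch :: w) = .sink := dfaA.evalFrom_s_cons c hch w
    rcases hacc with hacc | hacc <;> rw [hsink] at hacc <;> cases hacc
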